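/- arXiv:2106.12118 — 4 statements merged into one kernel-verified Lean document; each statement's English description precedes it below -/
import Mathlib

section
/- The Moore–Penrose pseudoinverse of a Kronecker product is the Kronecker product of the pseudoinverses: (A ⊗ B)⁺ = A⁺ ⊗ B⁺. -/
open Matrix Kronecker

/-- `P` is the Moore–Penrose pseudoinverse of `A`. -/
def IsMoorePenrose {m n : Type*} [Fintype m] [Fintype n]
    (A : Matrix m n ℝ) (P : Matrix n m ℝ) : Prop :=
  A * P * A = A ∧ P * A * P = P ∧ ((A * P)ᵀ = A * P) ∧ ((P * A)ᵀ = P * A)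

theorem isMoorePenrose_kronecker {m₁ n₁ m₂ n₂ : Type*} [Fintype m₁] [Fintype m₂]
    [Fintype n₁] [Fintype n₂]
    (A : Matrix m₁ n₁ ℝ) (B : Matrix m₂ n₂ ℝ)
    (P : Matrix n₁ m₁ ℝ) (Q : Matrix n₂ m₂ ℝ)
    (hA : IsMoorePenrose A P) (hB : IsMoorePenrose B Q) :
    IsMoorePenrose (A ⊗ₖ B) (P ⊗ₖ Q) := by
  obtain ⟨hA1, hA2, hA3, hA4⟩ := hA
  obtain ⟨hB1, hB2, hB3, hB4⟩ := hB
  refine ⟨?_, ?_, ?_, ?_⟩ <;>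
    simp only [← Matrix.mul_kronecker_mul, ← Matrix.kroneckerMap_transpose,
      hA1, hA2, hA3, hA4, hB1, hB2, hB3, hB4]
end

section
/- Error decomposition for Kronecker strategies: if W = W₁ ⊗ ... ⊗ W_d and A = A₁ ⊗ ... ⊗ A_d, then ‖A‖_K² · ‖W A⁺‖_F² = ∏_{i=1}^d ‖A_i‖_K² · ‖W_i A_i⁺‖_F², where ‖·‖_K is either the maximum L1 column norm or the maximum L2 column norm. -/
open Matrix

/-- The `d`-fold Kronecker product `A₁ ⊗ ⋯ ⊗ A_d`, represented as a matrix indexed by tuples. -/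
def kronPi {d : ℕ} {m n : Fin d → Type*} (A : ∀ i, Matrix (m i) (n i) ℝ) :
    Matrix (∀ i, m i) (∀ i, n i) ℝ :=
  fun q t => ∏ i, A i (q i) (t i)

/-- The L1 sensitivity norm: maximum L1 norm over the columns of a matrix. -/
noncomputable def l1Norm {m n : Type*} [Fintype m] (A : Matrix m n ℝ) : ℝ :=
  ⨆ t, ∑ q, |A q t|

/-- The L2 sensitivity norm: maximum L2 norm over the columns of a matrix. -/
noncomputable def l2Norm {m n : Type*} [Fintype m] (A : Matrix m n ℝ) : ℝ :=
  ⨆ t, Real.sqrt (∑ q, (A q t) ^ 2)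

/-- The Frobenius norm of a real matrix. -/
noncomputable def frobNorm {m n : Type*} [Fintype m] [Fintype n] (A : Matrix m n ℝ) : ℝ :=
  Real.sqrt (∑ q, ∑ t, (A q t) ^ 2)

lemma sum_pi_prod {d : ℕ} {κ : Fin d → Type*} [∀ i, Fintype (κ i)] (f : ∀ i, κ i → ℝ) :
    ∑ x : ∀ i, κ i, ∏ i, f i (x i) = ∏ i, ∑ j, f i j := (Fintype.prod_sum f).symm

lemma sqrt_prod {ι : Type*} (s : Finset ι) (g : ι → ℝ) (h : ∀ i ∈ s, 0 ≤ g i) :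
    Real.sqrt (∏ i ∈ s, g i) = ∏ i ∈ s, Real.sqrt (g i) := by
  classical
  induction s using Finset.induction_on with
  | empty => simp
  | @insert a s ha ih =>
    rw [Finset.prod_insert ha, Finset.prod_insert ha,
      Real.sqrt_mul (h a (Finset.mem_insert_self a s)),
      ih fun i hi' => h i (Finset.mem_insert_of_mem hi')]

lemma ciSup_pi_prod {d : ℕ} {n : Fin d → Type*} [∀ i, Fintype (n i)] [∀ i, Nonempty (n i)]
    (f : ∀ i, n i → ℝ) (hf : ∀ i x, 0 ≤ f i x) :
    ⨆ t : ∀ i, n i, ∏ i, f i (t i) = ∏ i, ⨆ x, f i x := by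
  have hex : ∀ i, ∃ x : n i, ∀ y, f i y ≤ f i x := fun i =>
    Finite.exists_max (f i)
  choose xs hxs using hex
  have hsup : ∀ i, (⨆ x, f i x) = f i (xs i) := fun i =>
    le_antisymm (ciSup_le fun y => hxs i y)
      (le_ciSup (Set.Finite.bddAbove (Set.finite_range _)) (xs i))
  rw [show (∏ i, ⨆ x, f i x) = ∏ i, f i (xs i) from Finset.prod_congr rfl fun i _ => hsup i]
  refine le_antisymm (ciSup_le fun t => Finset.prod_le_prod (fun i _ => hf i (t i))
    (fun i _ => hxs i (t i))) ?_
  exact le_ciSup (f := fun t : ∀ i, n i => ∏ i, f i (t i))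
    (Set.Finite.bddAbove (Set.finite_range _)) xs

lemma frob_sq' {a b : Type*} [Fintype a] [Fintype b] (X : Matrix a b ℝ) :
    (frobNorm X) ^ 2 = ∑ q, ∑ t, (X q t) ^ 2 := Real.sq_sqrt (by positivity)


lemma frob_sq_kron {d : ℕ} {m n : Fin d → Type*} [∀ i, Fintype (m i)] [∀ i, Fintype (n i)]
    (M : ∀ i, Matrix (m i) (n i) ℝ) :
    (frobNorm (kronPi M)) ^ 2 = ∏ i, (frobNorm (M i)) ^ 2 := by
  rw [frob_sq']
  calc ∑ q, ∑ t, (kronPi M q t) ^ 2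
      = ∑ q : ∀ i, m i, ∑ t : ∀ i, n i, ∏ i, (M i (q i) (t i)) ^ 2 := by
        refine Finset.sum_congr rfl fun q _ => Finset.sum_congr rfl fun t _ => ?_
        rw [kronPi, ← Finset.prod_pow]
    _ = ∑ q : ∀ i, m i, ∏ i, ∑ y, (M i (q i) y) ^ 2 :=
        Finset.sum_congr rfl fun q _ => sum_pi_prod fun i y => (M i (q i) y) ^ 2
    _ = ∏ i, ∑ x, ∑ y, (M i x y) ^ 2 := sum_pi_prod fun i x => ∑ y, (M i x y) ^ 2
    _ = ∏ i, (frobNorm (M i)) ^ 2 := Finset.prod_congr rfl fun i _ => (frob_sq' _).symm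

lemma kron_mul {d : ℕ} {mW mA nn : Fin d → Type*}
    [∀ i, Fintype (mW i)] [∀ i, Fintype (mA i)] [∀ i, Fintype (nn i)]
    (W : ∀ i, Matrix (mW i) (nn i) ℝ) (P : ∀ i, Matrix (nn i) (mA i) ℝ) :
    kronPi W * kronPi P = kronPi (fun i => W i * P i) := by
  ext q t
  simp only [Matrix.mul_apply, kronPi, ← Finset.prod_mul_distrib]
  exact sum_pi_prod fun i x => W i (q i) x * P i x (t i)

/-- Error decomposition for Kronecker strategies: for `W = W₁ ⊗ ⋯ ⊗ W_d` and
`A = A₁ ⊗ ⋯ ⊗ A_d` (with pseudoinverse `A⁺ = A₁⁺ ⊗ ⋯ ⊗ A_d⁺`),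
`‖A‖_K² ‖W A⁺‖_F² = ∏ᵢ ‖Aᵢ‖_K² ‖Wᵢ Aᵢ⁺‖_F²` for both sensitivity norms. -/
theorem error_decomposition {d : ℕ} {mW mA nn : Fin d → Type*}
    [∀ i, Fintype (mW i)] [∀ i, Fintype (mA i)] [∀ i, Fintype (nn i)] [∀ i, Nonempty (nn i)]
    (W : ∀ i, Matrix (mW i) (nn i) ℝ) (A : ∀ i, Matrix (mA i) (nn i) ℝ)
    (P : ∀ i, Matrix (nn i) (mA i) ℝ) (hP : ∀ i, IsMoorePenrose (A i) (P i)) :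
    ((l1Norm (kronPi A)) ^ 2 * (frobNorm (kronPi W * kronPi P)) ^ 2
        = ∏ i, (l1Norm (A i)) ^ 2 * (frobNorm (W i * P i)) ^ 2) ∧
    ((l2Norm (kronPi A)) ^ 2 * (frobNorm (kronPi W * kronPi P)) ^ 2
        = ∏ i, (l2Norm (A i)) ^ 2 * (frobNorm (W i * P i)) ^ 2) := by
  have hfrob : (frobNorm (kronPi W * kronPi P)) ^ 2 = ∏ i, (frobNorm (W i * P i)) ^ 2 := by
    rw [kron_mul, frob_sq_kron]
  have hl1 : l1Norm (kronPi A) = ∏ i, l1Norm (A i) := by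
    unfold l1Norm
    calc (⨆ t : ∀ i, nn i, ∑ q, |kronPi A q t|)
        = ⨆ t : ∀ i, nn i, ∏ i, ∑ q, |A i q (t i)| := by
          refine iSup_congr fun t => ?_
          rw [← sum_pi_prod fun i x => |A i x (t i)|]
          exact Finset.sum_congr rfl fun q _ => Finset.abs_prod _ _
      _ = ∏ i, ⨆ x, ∑ q, |A i q x| :=
          ciSup_pi_prod (fun i x => ∑ q, |A i q x|)
            fun i x => Finset.sum_nonneg fun q _ => abs_nonneg _
  have hl2 : l2Norm (kronPi A) = ∏ i, l2Norm (A i) := by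
    unfold l2Norm
    calc (⨆ t : ∀ i, nn i, Real.sqrt (∑ q, (kronPi A q t) ^ 2))
        = ⨆ t : ∀ i, nn i, ∏ i, Real.sqrt (∑ q, (A i q (t i)) ^ 2) := by
          refine iSup_congr fun t => ?_
          rw [show (∑ q, (kronPi A q t) ^ 2) = ∏ i, ∑ q, (A i q (t i)) ^ 2 by
            rw [← sum_pi_prod fun i x => (A i x (t i)) ^ 2]
            refine Finset.sum_congr rfl fun q _ => ?_
            rw [kronPi, ← Finset.prod_pow]]
          exact sqrt_prod _ _ fun i _ => Finset.sum_nonneg fun q _ => sq_nonneg _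
      _ = ∏ i, ⨆ x, Real.sqrt (∑ q, (A i q x) ^ 2) :=
          ciSup_pi_prod (fun i x => Real.sqrt (∑ q, (A i q x) ^ 2))
            fun i x => Real.sqrt_nonneg _
  constructor
  · rw [hl1, hfrob, ← Finset.prod_pow, ← Finset.prod_mul_distrib]
  · rw [hl2, hfrob, ← Finset.prod_pow, ← Finset.prod_mul_distrib]
end

section
/- Marginal Gram matrices commute and are closed under multiplication: for any u, v ∈ ℝ^{2^d}, G(u) G(v) = G(w) where w(k) = Σ_{a,b: a&b=k} u(a) v(b) c(a|b); in particular G(u)G(v) = G(v)G(u). -/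
open Matrix

instance fintypeIte (p : Prop) [Decidable p] (α β : Type) [Fintype α] [Fintype β] :
    Fintype (if p then α else β) := by
  by_cases h : p
  · rw [if_pos h]; infer_instance
  · rw [if_neg h]; infer_instance

instance decEqIte (p : Prop) [Decidable p] (α β : Type) [DecidableEq α] [DecidableEq β] :
    DecidableEq (if p then α else β) := by
  by_cases h : p
  · rw [if_pos h]; infer_instance
  · rw [if_neg h]; infer_instance

/-- Row index type for the query matrix of the marginal `a`: one coordinate for each
attribute `i` with `a i = true`, and a trivial coordinate otherwise. -/
def RowIdx {d : ℕ} (n : Fin d → ℕ) (a : Fin d → Bool) : Type :=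
  ∀ i, if a i then Fin (n i) else Unit

instance {d : ℕ} (n : Fin d → ℕ) (a : Fin d → Bool) : Fintype (RowIdx n a) := by
  unfold RowIdx; infer_instance

instance {d : ℕ} (n : Fin d → ℕ) (a : Fin d → Bool) : DecidableEq (RowIdx n a) := by
  unfold RowIdx; infer_instance

/-- `c(a) = ∏ᵢ [nᵢ if aᵢ = 0 else 1]`. -/
def cvec {d : ℕ} (n : Fin d → ℕ) (a : Fin d → Bool) : ℝ :=
  ∏ i, if a i then 1 else (n i : ℝ)

/-- `H(a) = ⊗ᵢ [𝟏 if aᵢ = 0, I if aᵢ = 1]`. -/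
def Hmat {d : ℕ} (n : Fin d → ℕ) (a : Fin d → Bool) :
    Matrix (∀ i, Fin (n i)) (∀ i, Fin (n i)) ℝ :=
  fun q t => ∏ i, if a i then (if q i = t i then 1 else 0) else 1

/-- `G(v) = Σ_a v(a) H(a)`: a marginal Gram matrix. -/
noncomputable def Gmat {d : ℕ} (n : Fin d → ℕ) (v : (Fin d → Bool) → ℝ) :
    Matrix (∀ i, Fin (n i)) (∀ i, Fin (n i)) ℝ :=
  ∑ a, v a • Hmat n a

/-- `Q(a) = ⊗ᵢ [T if aᵢ = 0, I if aᵢ = 1]`: the query matrix of the marginal `a`. -/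
def Qmat {d : ℕ} (n : Fin d → ℕ) (a : Fin d → Bool) :
    Matrix (RowIdx n a) (∀ i, Fin (n i)) ℝ :=
  fun r t => ∏ i, if h : a i then (if cast (if_pos h) (r i) = t i then 1 else 0) else 1

/-- `M(u)`: the vertical stacking of `u(a) • Q(a)` over all marginals `a`. -/
def Mmat {d : ℕ} (n : Fin d → ℕ) (u : (Fin d → Bool) → ℝ) :
    Matrix ((a : Fin d → Bool) × RowIdx n a) (∀ i, Fin (n i)) ℝ :=
  fun r t => u r.1 * Qmat n r.1 r.2 t

lemma Hmat_mul_Hmat {d : ℕ} (n : Fin d → ℕ) (a b : Fin d → Bool) :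
    Hmat n a * Hmat n b =
      cvec n (fun i => a i || b i) • Hmat n (fun i => a i && b i) := by
  ext q t
  simp only [mul_apply, Hmat, Matrix.smul_apply, smul_eq_mul, cvec]
  rw [← Finset.prod_mul_distrib]
  have : ∀ s : ∀ i, Fin (n i),
      (∏ i, if a i then (if q i = s i then (1:ℝ) else 0) else 1) *
      (∏ i, if b i then (if s i = t i then (1:ℝ) else 0) else 1) =
      ∏ i, (if a i then (if q i = s i then (1:ℝ) else 0) else 1) *
           (if b i then (if s i = t i then (1:ℝ) else 0) else 1) := by
    intro s; rw [Finset.prod_mul_distrib]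
  simp only [this]
  have hps := Finset.prod_univ_sum (fun i => (Finset.univ : Finset (Fin (n i))))
    (fun i si => (if a i then (if q i = si then (1:ℝ) else 0) else 1) *
      (if b i then (if si = t i then (1:ℝ) else 0) else 1))
  rw [Fintype.piFinset_univ] at hps
  rw [← hps]
  refine Finset.prod_congr rfl fun i _ => ?_
  rcases Bool.dichotomy (a i) with ha | ha <;> rcases Bool.dichotomy (b i) with hb | hb <;>
    simp [ha, hb, Finset.sum_ite_eq, Finset.sum_ite_eq', Finset.card_univ, mul_comm]

lemma Gmat_mul_Gmat_aux {d : ℕ} (n : Fin d → ℕ) (u v : (Fin d → Bool) → ℝ) :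
    Gmat n u * Gmat n v =
      Gmat n (fun k => ∑ p ∈ Finset.univ.filter
        (fun p : (Fin d → Bool) × (Fin d → Bool) => (fun i => p.1 i && p.2 i) = k),
        u p.1 * v p.2 * cvec n (fun i => p.1 i || p.2 i)) := by
  unfold Gmat
  rw [Finset.sum_mul_sum]
  simp only [smul_mul_smul_comm, Hmat_mul_Hmat, Finset.sum_smul, smul_smul]
  rw [← Finset.sum_product', Finset.univ_product_univ]
  rw [← Finset.sum_fiberwise Finset.univ
    (fun p : (Fin d → Bool) × (Fin d → Bool) => fun i => p.1 i && p.2 i)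
    (fun p => (u p.1 * v p.2 * cvec n (fun i => p.1 i || p.2 i)) •
      Hmat n (fun i => p.1 i && p.2 i))]
  refine Finset.sum_congr rfl fun k _ => ?_
  refine Finset.sum_congr rfl fun p hp => ?_
  have hk : (fun i => p.1 i && p.2 i) = k := (Finset.mem_filter.mp hp).2
  rw [hk]

/-- Marginal Gram matrices are closed under multiplication and commute. -/
theorem Gmat_mul_Gmat {d : ℕ} (n : Fin d → ℕ) (u v : (Fin d → Bool) → ℝ) :
    Gmat n u * Gmat n v =
      Gmat n (fun k => ∑ p ∈ Finset.univ.filter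
        (fun p : (Fin d → Bool) × (Fin d → Bool) => (fun i => p.1 i && p.2 i) = k),
        u p.1 * v p.2 * cvec n (fun i => p.1 i || p.2 i)) ∧
    Gmat n u * Gmat n v = Gmat n v * Gmat n u := by
  refine ⟨Gmat_mul_Gmat_aux n u v, ?_⟩
  rw [Gmat_mul_Gmat_aux n u v, Gmat_mul_Gmat_aux n v u]
  refine congrArg (Gmat n) (funext fun k => ?_)
  refine Finset.sum_equiv (Equiv.prodComm _ _) (fun p => ?_) (fun p _ => ?_)
  · simp only [Finset.mem_filter, Finset.mem_univ, true_and, Equiv.prodComm_apply,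
      Prod.fst_swap, Prod.snd_swap]
    constructor <;> intro h <;> rw [← h] <;> funext i <;> exact Bool.and_comm _ _
  · simp only [Equiv.prodComm_apply, Prod.fst_swap, Prod.snd_swap]
    have ho : (fun i => p.1 i || p.2 i) = fun i => p.2 i || p.1 i := by
      funext i; exact Bool.or_comm _ _
    rw [ho]; ring
end

section
/- Eigenstructure of marginal building blocks: define V(a) = ⊗_{i=1}^d [T (all-ones column with appropriate orientation, i.e. the n_i×1 matrix of ones) if a_i=0, and (𝟏 − n_i I) restricted appropriately if a_i=1]. Then for any b ∈ [2^d], H(b) V(a) = λ·V(a) where λ = c(b) if a & b = a and λ = 0 otherwise. -/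
open Matrix

/-- `V(a) = ⊗ᵢ [n_i×1 all-ones matrix if aᵢ=0, 𝟏 − nᵢ I if aᵢ=1]`. -/
def Vmat {d : ℕ} (n : Fin d → ℕ) (a : Fin d → Bool) :
    Matrix (∀ i, Fin (n i)) (RowIdx n a) ℝ :=
  fun q r => ∏ i, if h : a i then
    (if q i = cast (if_pos h) (r i) then 1 - (n i : ℝ) else 1) else 1

/-- `H(b) V(a) = λ V(a)` with `λ = c(b)` if `a & b = a` and `λ = 0` otherwise. -/
theorem Hmat_mul_Vmat {d : ℕ} (n : Fin d → ℕ) (a b : Fin d → Bool) :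
    Hmat n b * Vmat n a =
      (if (fun i => a i && b i) = a then cvec n b else 0) • Vmat n a := by
  ext q r
  simp only [Matrix.mul_apply, Hmat, Vmat, Matrix.smul_apply, smul_eq_mul]
  have step : ∀ t : ∀ i, Fin (n i),
      (∏ i, if b i then (if q i = t i then (1:ℝ) else 0) else 1) *
      (∏ i, if h : a i then (if t i = cast (if_pos h) (r i) then 1 - (n i : ℝ) else 1) else 1)
      = ∏ i, ((if b i then (if q i = t i then (1:ℝ) else 0) else 1) *
          (if h : a i then (if t i = cast (if_pos h) (r i) then 1 - (n i : ℝ) else 1) else 1)) := by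
    intro t; rw [Finset.prod_mul_distrib]
  simp only [step]
  rw [← Fintype.prod_sum (fun i (j : Fin (n i)) =>
      (if b i then (if q i = j then (1:ℝ) else 0) else 1) *
      (if h : a i then (if j = cast (if_pos h) (r i) then 1 - (n i : ℝ) else 1) else 1))]
  by_cases hc : (fun i => a i && b i) = a
  · rw [if_pos hc, cvec, ← Finset.prod_mul_distrib]
    refine Finset.prod_congr rfl fun i _ => ?_
    have hi : (a i && b i) = a i := congrFun hc i
    by_cases ha : a i
    · have hb : b i := by cases hab : b i <;> simp [ha, hab] at hi ⊢
      simp only [ha, hb, if_true, dif_pos ha, ite_mul, one_mul, zero_mul,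
        Finset.sum_ite_eq, Finset.mem_univ, if_true]
    · simp only [dif_neg ha, mul_one]
      by_cases hb : b i
      · simp [hb, Finset.sum_ite_eq, Finset.mem_univ]
      · simp [hb, Finset.sum_const, Finset.card_univ]
  · rw [if_neg hc, zero_mul]
    have : ∃ i, a i = true ∧ b i = false := by
      by_contra h
      push_neg at h
      apply hc; funext i
      cases ha : a i with
      | false => simp
      | true => simp [h i ha]
    obtain ⟨i, ha, hb⟩ := this
    apply Finset.prod_eq_zero (Finset.mem_univ i)
    simp only [hb, if_false, one_mul, dif_pos ha]
    have : ∀ j : Fin (n i), (if j = cast (if_pos ha) (r i) then (1:ℝ) - n i else 1)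
        = 1 - (if j = cast (if_pos ha) (r i) then (n i : ℝ) else 0) := by
      intro j; by_cases hj : j = cast (if_pos ha) (r i) <;> simp [hj]
    simp only [Bool.false_eq_true, if_false, one_mul, this, Finset.sum_sub_distrib, Finset.sum_const, Finset.card_univ,
      Fintype.card_fin, Finset.sum_ite_eq', Finset.mem_univ, if_true, nsmul_eq_mul,
      mul_one, sub_self]
end
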